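/- If G is the join of graphs G_1 and G_2 where both E(G_1) ≠ ∅ and E(G_2) ≠ ∅, then i_R(G) = min{i_R(G_1), i_R(G_2)}. -/

import Mathlib

/-- `f` is an Independent Roman Dominating Function of `G`: values in {0,1,2},
every 0-labeled vertex has a 2-labeled neighbor, and no two adjacent vertices
are both positively labeled. -/
def IsIRDF {V : Type*} (G : SimpleGraph V) (f : V → ℕ) : Prop :=
  (∀ v, f v ≤ 2) ∧
  (∀ v, f v = 0 → ∃ u, G.Adj v u ∧ f u = 2) ∧
  (∀ u v, G.Adj u v → f u = 0 ∨ f v = 0)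

/-- The weight of a labeling. -/
def irdfWeight {V : Type*} [Fintype V] (f : V → ℕ) : ℕ := ∑ v, f v

/-- The independent Roman domination number. -/
noncomputable def iR {V : Type*} [Fintype V] (G : SimpleGraph V) : ℕ :=
  sInf {w | ∃ f : V → ℕ, IsIRDF G f ∧ irdfWeight f = w}

/-- `s` is an independent dominating set of `G`. -/
def IsIndepDom {V : Type*} (G : SimpleGraph V) (s : Finset V) : Prop :=
  (∀ u ∈ s, ∀ v ∈ s, ¬ G.Adj u v) ∧ (∀ v, v ∉ s → ∃ u ∈ s, G.Adj u v)

/-- The independent domination number. -/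
noncomputable def indepDomNum {V : Type*} [Fintype V] (G : SimpleGraph V) : ℕ :=
  sInf {n | ∃ s : Finset V, IsIndepDom G s ∧ s.card = n}

/-- The disjoint union of two graphs, on the sum type. -/
def disjUnionGraph {V₁ V₂ : Type*} (G₁ : SimpleGraph V₁) (G₂ : SimpleGraph V₂) :
    SimpleGraph (V₁ ⊕ V₂) where
  Adj a b :=
    match a, b with
    | .inl u, .inl v => G₁.Adj u v
    | .inr u, .inr v => G₂.Adj u v
    | _, _ => False
  symm := by
    refine ⟨?_⟩
    rintro (u | u) (v | v) h
    · exact G₁.adj_symm h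
    · exact h.elim
    · exact h.elim
    · exact G₂.adj_symm h
  loopless := by
    refine ⟨?_⟩
    rintro (u | u) h
    · exact G₁.ne_of_adj h rfl
    · exact G₂.ne_of_adj h rfl

/-- The join of two graphs: their disjoint union together with all edges
between the two parts. -/
def joinGraph {V₁ V₂ : Type*} (G₁ : SimpleGraph V₁) (G₂ : SimpleGraph V₂) :
    SimpleGraph (V₁ ⊕ V₂) where
  Adj a b :=
    match a, b with
    | .inl u, .inl v => G₁.Adj u v
    | .inr u, .inr v => G₂.Adj u v
    | .inl _, .inr _ => True
    | .inr _, .inl _ => True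
  symm := by
    refine ⟨?_⟩
    rintro (u | u) (v | v) h
    · exact G₁.adj_symm h
    · trivial
    · trivial
    · exact G₂.adj_symm h
  loopless := by
    refine ⟨?_⟩
    rintro (u | u) h
    · exact G₁.ne_of_adj h rfl
    · exact G₂.ne_of_adj h rfl

open Classical in
lemma exists_irdf {V : Type*} [Fintype V] (G : SimpleGraph V) : ∃ f, IsIRDF G f := by
  classical
  have hne : (Finset.univ.powerset.filter
      (fun s : Finset V => ∀ u ∈ s, ∀ v ∈ s, ¬ G.Adj u v)).Nonempty := by
    refine ⟨∅, ?_⟩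
    simp
  obtain ⟨s, hs, hmax⟩ := (Finset.univ.powerset.filter
      (fun s : Finset V => ∀ u ∈ s, ∀ v ∈ s, ¬ G.Adj u v)).exists_max_image
      Finset.card hne
  simp only [Finset.mem_filter] at hs
  refine ⟨fun v => if v ∈ s then 2 else 0, ?_, ?_, ?_⟩
  · intro v; by_cases h : v ∈ s <;> simp [h]
  · intro v hv
    have hvs : v ∉ s := by by_contra h; simp [h] at hv
    by_contra hcon
    push_neg at hcon
    have hins : insert v s ∈ Finset.univ.powerset.filter
        (fun s : Finset V => ∀ u ∈ s, ∀ v ∈ s, ¬ G.Adj u v) := by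
      simp only [Finset.mem_filter, Finset.mem_powerset]
      refine ⟨Finset.subset_univ _, ?_⟩
      intro a ha b hb hab
      rcases Finset.mem_insert.1 ha with rfl | ha2
      · rcases Finset.mem_insert.1 hb with rfl | hb2
        · exact G.loopless.irrefl _ hab
        · exact (hcon b hab (by simp [hb2])).elim
      · rcases Finset.mem_insert.1 hb with rfl | hb2
        · exact (hcon a hab.symm (by simp [ha2])).elim
        · exact hs.2 a ha2 b hb2 hab
    have := hmax _ hins
    have : s.card < (insert v s).card := by
      rw [Finset.card_insert_of_notMem hvs]; omega
    omega
  · intro u v huv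
    by_cases hu : u ∈ s
    · by_cases hv : v ∈ s
      · exact (hs.2 u hu v hv huv).elim
      · right; simp [hv]
    · left; simp [hu]

lemma weight_sum {V₁ V₂ : Type*} [Fintype V₁] [Fintype V₂] (f : V₁ ⊕ V₂ → ℕ) :
    irdfWeight f = (∑ v, f (Sum.inl v)) + ∑ v, f (Sum.inr v) := by
  simp [irdfWeight, Fintype.sum_sum_type]

lemma join_le_left {V₁ V₂ : Type*} [Fintype V₁] [Fintype V₂]
    (G₁ : SimpleGraph V₁) (G₂ : SimpleGraph V₂)
    (h₁ : ∃ u v : V₁, G₁.Adj u v) (f₁ : V₁ → ℕ) (hf₁ : IsIRDF G₁ f₁) :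
    ∃ F : V₁ ⊕ V₂ → ℕ, IsIRDF (joinGraph G₁ G₂) F ∧ irdfWeight F = irdfWeight f₁ := by
  obtain ⟨hb, hz, hi⟩ := hf₁
  -- some vertex of G₁ has label 2
  have h2 : ∃ u, f₁ u = 2 := by
    obtain ⟨a, b, hab⟩ := h₁
    rcases hi a b hab with ha | hb'
    · obtain ⟨u, _, hu⟩ := hz a ha; exact ⟨u, hu⟩
    · obtain ⟨u, _, hu⟩ := hz b hb'; exact ⟨u, hu⟩
  refine ⟨Sum.elim f₁ 0, ⟨?_, ?_, ?_⟩, ?_⟩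
  · rintro (v | v) <;> simp [hb]
  · rintro (v | v) hv
    · obtain ⟨u, hu, hu2⟩ := hz v hv
      exact ⟨Sum.inl u, hu, hu2⟩
    · obtain ⟨u, hu2⟩ := h2
      exact ⟨Sum.inl u, trivial, hu2⟩
  · rintro (u | u) (v | v) huv
    · exact hi u v huv
    · right; rfl
    · left; rfl
    · left; rfl
  · rw [weight_sum]; simp [irdfWeight]

lemma lower_bound {V₁ V₂ : Type*} [Fintype V₁] [Fintype V₂]
    (G₁ : SimpleGraph V₁) (G₂ : SimpleGraph V₂)
    (F : V₁ ⊕ V₂ → ℕ) (hF : IsIRDF (joinGraph G₁ G₂) F) :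
    min (iR G₁) (iR G₂) ≤ irdfWeight F := by
  obtain ⟨hb, hz, hi⟩ := hF
  by_cases hr : ∀ v, F (Sum.inr v) = 0
  · -- restriction to V₁ is an IRDF of G₁
    have hIR : IsIRDF G₁ (fun v => F (Sum.inl v)) := by
      refine ⟨fun v => hb _, ?_, fun u v huv => hi (Sum.inl u) (Sum.inl v) huv⟩
      intro v hv
      obtain ⟨u, hu, hu2⟩ := hz (Sum.inl v) hv
      rcases u with u | u
      · exact ⟨u, hu, hu2⟩
      · rw [hr u] at hu2; omega
    have h1 : iR G₁ ≤ irdfWeight F := by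
      apply Nat.sInf_le
      refine ⟨fun v => F (Sum.inl v), hIR, ?_⟩
      rw [weight_sum]
      simp [irdfWeight, hr]
    exact le_trans (min_le_left _ _) h1
  · push_neg at hr
    obtain ⟨w, hw⟩ := hr
    have hl : ∀ v, F (Sum.inl v) = 0 := by
      intro v
      rcases hi (Sum.inl v) (Sum.inr w) trivial with h | h
      · exact h
      · exact (hw h).elim
    have hIR : IsIRDF G₂ (fun v => F (Sum.inr v)) := by
      refine ⟨fun v => hb _, ?_, fun u v huv => hi (Sum.inr u) (Sum.inr v) huv⟩
      intro v hv
      obtain ⟨u, hu, hu2⟩ := hz (Sum.inr v) hv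
      rcases u with u | u
      · rw [hl u] at hu2; omega
      · exact ⟨u, hu, hu2⟩
    have h2 : iR G₂ ≤ irdfWeight F := by
      apply Nat.sInf_le
      refine ⟨fun v => F (Sum.inr v), hIR, ?_⟩
      rw [weight_sum]
      simp [irdfWeight, hl]
    exact le_trans (min_le_right _ _) h2

/-- if both `G₁` and `G₂` contain an edge, then the join satisfies
`i_R(G) = min{i_R(G₁), i_R(G₂)}`. -/
theorem iR_join_edges {V₁ V₂ : Type*} [Fintype V₁] [Fintype V₂]
    (G₁ : SimpleGraph V₁) (G₂ : SimpleGraph V₂)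
    (h₁ : ∃ u v : V₁, G₁.Adj u v) (h₂ : ∃ u v : V₂, G₂.Adj u v) :
    iR (joinGraph G₁ G₂) = min (iR G₁) (iR G₂) := by
  apply le_antisymm
  · -- iR join ≤ min
    apply le_min
    · obtain ⟨f₁, hf₁⟩ := exists_irdf G₁
      have hne : {w | ∃ f : V₁ → ℕ, IsIRDF G₁ f ∧ irdfWeight f = w}.Nonempty :=
        ⟨irdfWeight f₁, f₁, hf₁, rfl⟩
      obtain ⟨g, hg, hgw⟩ := Nat.sInf_mem hne
      obtain ⟨F, hF, hFw⟩ := join_le_left G₁ G₂ h₁ g hg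
      have : iR (joinGraph G₁ G₂) ≤ irdfWeight F := Nat.sInf_le ⟨F, hF, rfl⟩
      rw [hFw, hgw] at this
      exact this
    · obtain ⟨f₂, hf₂⟩ := exists_irdf G₂
      have hne : {w | ∃ f : V₂ → ℕ, IsIRDF G₂ f ∧ irdfWeight f = w}.Nonempty :=
        ⟨irdfWeight f₂, f₂, hf₂, rfl⟩
      obtain ⟨g, hg, hgw⟩ := Nat.sInf_mem hne
      obtain ⟨F, hF, hFw⟩ := join_le_left G₂ G₁ h₂ g hg
      -- F is an IRDF of joinGraph G₂ G₁; transport to joinGraph G₁ G₂ by swapping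
      obtain ⟨hb, hz, hi⟩ := hF
      set F' : V₁ ⊕ V₂ → ℕ := fun v => F v.swap with hF'def
      have hF' : IsIRDF (joinGraph G₁ G₂) F' := by
        refine ⟨fun v => hb _, ?_, ?_⟩
        · intro v hv
          obtain ⟨u, hu, hu2⟩ := hz v.swap hv
          refine ⟨u.swap, ?_, by simpa [hF'def] using hu2⟩
          rcases v with v | v <;> rcases u with u | u <;>
            simpa [joinGraph, Sum.swap] using hu
        · intro u v huv
          have : (joinGraph G₂ G₁).Adj u.swap v.swap := by
            rcases u with u | u <;> rcases v with v | v <;>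
              simpa [joinGraph, Sum.swap] using huv
          exact hi u.swap v.swap this
      have hw' : irdfWeight F' = irdfWeight F := by
        rw [weight_sum, weight_sum F]
        simp [hF'def, Sum.swap]
        omega
      have : iR (joinGraph G₁ G₂) ≤ irdfWeight F' := Nat.sInf_le ⟨F', hF', rfl⟩
      rw [hw', hFw, hgw] at this
      exact this
  · -- min ≤ iR join
    obtain ⟨F, hF⟩ := exists_irdf (joinGraph G₁ G₂)
    have hne : {w | ∃ f : V₁ ⊕ V₂ → ℕ, IsIRDF (joinGraph G₁ G₂) f ∧ irdfWeight f = w}.Nonempty :=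
      ⟨irdfWeight F, F, hF, rfl⟩
    obtain ⟨g, hg, hgw⟩ := Nat.sInf_mem hne
    have := lower_bound G₁ G₂ g hg
    rw [hgw] at this
    exact this
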